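/- arXiv:1701.06119 — 3 statements merged into one kernel-verified Lean document; each statement's English description precedes it below -/
import Mathlib

section
/- For f : X × X → ℝ let Δ(f) denote the unique w ∈ W(X,E) for which there exist Z > 0 and γ : X → (0,∞) with w(y|x) = (1/Z)(γ(y)/γ(x)) exp(f(x,y)) for all (x,y) ∈ E. Then: (i) Δ is surjective onto W(X,E); and (ii) for f_1, f_2 : X × X → ℝ one has Δ(f_1) = Δ(f_2) if and only if there exist κ : X → ℝ and c ∈ ℝ with f_1(x,y) − f_2(x,y) = κ(y) − κ(x) + c for all (x,y) ∈ E. -/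
/-!
Taking logarithms, `Δ f` is cohomologous to `f` (with `κ = log γ`, `c = -log Z`); so part (ii)
and, with `f = log w`, part (i) reduce to: two kernels in `W(X,E)` with cohomologous logarithms
coincide. If `log w₁ - log w₂ = κ y - κ x + c` on `E`, then `exp κ` is a positive eigenvector
of `w₂` with eigenvalue `exp (-c)`. Averaging at the maximum and at the minimum of `κ` forces
`c = 0`; then `exp κ` is harmonic, and the maximum principle propagates its maximum along the
edges of the strongly connected graph, so `κ` is constant and `w₁ = w₂`.
-/

open scoped BigOperators

/-- The directed graph `(X, E)` is strongly connected: any vertex can be reached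
from any other by a path of length at least one along edges in `E`. -/
def StronglyConnected {X : Type*} (E : Finset (X × X)) : Prop :=
  ∀ x y : X, Relation.TransGen (fun a b => (a, b) ∈ E) x y

/-- `w` is a Markov kernel on `(X, E)` (an element of `W(X,E)`):
`w x y` denotes `w(y|x)`, is nonnegative, sums to one over `y`,
and is positive exactly on the edge set `E`. -/
def IsMarkovKernel {X : Type*} [Fintype X] (E : Finset (X × X)) (w : X → X → ℝ) : Prop :=
  (∀ x y, 0 ≤ w x y) ∧ (∀ x, ∑ y, w x y = 1) ∧ (∀ x y, (0 < w x y ↔ (x, y) ∈ E))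

open Real Finset

section Cohomologous

variable {X : Type*} {E : Finset (X × X)}

def Cohomologous (E : Finset (X × X)) (f₁ f₂ : X → X → ℝ) : Prop :=
  ∃ (κ : X → ℝ) (c : ℝ), ∀ x y, (x, y) ∈ E → f₁ x y - f₂ x y = κ y - κ x + c

theorem Cohomologous.symm {f₁ f₂ : X → X → ℝ} (h : Cohomologous E f₁ f₂) :
    Cohomologous E f₂ f₁ := by
  obtain ⟨κ, c, h⟩ := h
  exact ⟨-κ, -c, fun x y hxy => by simp only [Pi.neg_apply]; linarith [h x y hxy]⟩

theorem Cohomologous.trans {f₁ f₂ f₃ : X → X → ℝ} (h₁₂ : Cohomologous E f₁ f₂)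
    (h₂₃ : Cohomologous E f₂ f₃) : Cohomologous E f₁ f₃ := by
  obtain ⟨κ, c, h₁₂⟩ := h₁₂
  obtain ⟨κ', c', h₂₃⟩ := h₂₃
  exact ⟨κ + κ', c + c', fun x y hxy => by
    simp only [Pi.add_apply]; linarith [h₁₂ x y hxy, h₂₃ x y hxy]⟩

theorem cohomologous_log_of_eq_gibbs {w f : X → X → ℝ} {Z : ℝ} {γ : X → ℝ} (hZ : 0 < Z)
    (hγ : ∀ x, 0 < γ x)
    (h : ∀ x y, (x, y) ∈ E → w x y = (1 / Z) * (γ y / γ x) * exp (f x y)) :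
    Cohomologous E (fun x y => log (w x y)) f := by
  refine ⟨fun x => log (γ x), -log Z, fun x y hxy => ?_⟩
  have hZ' := hZ.ne'
  have hγx := (hγ x).ne'
  have hγy := (hγ y).ne'
  beta_reduce
  rw [h x y hxy, log_mul (by positivity) (exp_pos _).ne', log_mul (by positivity) (by positivity),
    log_div hγy hγx, one_div, log_inv, log_exp]
  ring

end Cohomologous

namespace IsMarkovKernel

variable {X : Type*} [Fintype X] {E : Finset (X × X)} {w : X → X → ℝ}

theorem eq_zero_of_notMem (hw : IsMarkovKernel E w) {x y : X} (h : (x, y) ∉ E) : w x y = 0 :=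
  le_antisymm (not_lt.1 fun hpos => h ((hw.2.2 x y).1 hpos)) (hw.1 x y)

theorem sum_mul_const (hw : IsMarkovKernel E w) (x : X) (M : ℝ) : ∑ y, w x y * M = M := by
  rw [← sum_mul, hw.2.1 x, one_mul]

theorem sum_mul_le (hw : IsMarkovKernel E w) (x : X) {γ : X → ℝ} {M : ℝ} (h : ∀ y, γ y ≤ M) :
    ∑ y, w x y * γ y ≤ M :=
  (sum_le_sum fun y _ => mul_le_mul_of_nonneg_left (h y) (hw.1 x y)).trans_eq
    (hw.sum_mul_const x M)

theorem le_sum_mul (hw : IsMarkovKernel E w) (x : X) {γ : X → ℝ} {m : ℝ} (h : ∀ y, m ≤ γ y) :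
    m ≤ ∑ y, w x y * γ y :=
  (hw.sum_mul_const x m).symm.trans_le
    (sum_le_sum fun y _ => mul_le_mul_of_nonneg_left (h y) (hw.1 x y))

theorem eq_of_sum_mul_eq_max (hw : IsMarkovKernel E w) {γ : X → ℝ} {M : ℝ}
    (hle : ∀ y, γ y ≤ M) {x y : X} (hsum : ∑ z, w x z * γ z = M) (hxy : (x, y) ∈ E) :
    γ y = M := by
  by_contra hne
  have hlt : ∑ z, w x z * γ z < ∑ z, w x z * M :=
    sum_lt_sum (fun z _ => mul_le_mul_of_nonneg_left (hle z) (hw.1 x z))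
      ⟨y, mem_univ y, mul_lt_mul_of_pos_left (lt_of_le_of_ne (hle y) hne) ((hw.2.2 x y).2 hxy)⟩
  rw [hsum, hw.sum_mul_const] at hlt
  exact lt_irrefl M hlt

theorem eigenvalue_eq_one_of_pos [Nonempty X] (hw : IsMarkovKernel E w) {γ : X → ℝ}
    (hγ : ∀ x, 0 < γ x) {ρ : ℝ} (h : ∀ x, ∑ y, w x y * γ y = ρ * γ x) : ρ = 1 := by
  obtain ⟨x₀, hx₀⟩ := Finite.exists_max γ
  obtain ⟨x₁, hx₁⟩ := Finite.exists_min γ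
  have hle : ρ * γ x₀ ≤ 1 * γ x₀ := by rw [one_mul, ← h]; exact hw.sum_mul_le x₀ hx₀
  have hge : 1 * γ x₁ ≤ ρ * γ x₁ := by rw [one_mul, ← h]; exact hw.le_sum_mul x₁ hx₁
  exact le_antisymm (le_of_mul_le_mul_right hle (hγ x₀)) (le_of_mul_le_mul_right hge (hγ x₁))

theorem eq_of_harmonic (hconn : StronglyConnected E) (hw : IsMarkovKernel E w) {γ : X → ℝ}
    (h : ∀ x, ∑ y, w x y * γ y = γ x) (x y : X) : γ x = γ y := by
  have : Nonempty X := ⟨x⟩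
  obtain ⟨x₀, hx₀⟩ := Finite.exists_max γ
  have hmax : ∀ z, γ z = γ x₀ := fun z => by
    induction hconn x₀ z with
    | single hab => exact hw.eq_of_sum_mul_eq_max hx₀ (h x₀) hab
    | tail _ hbc ih => exact hw.eq_of_sum_mul_eq_max hx₀ ((h _).trans ih) hbc
  rw [hmax x, hmax y]

theorem eq_of_cohomologous_log (hconn : StronglyConnected E) {w₁ w₂ : X → X → ℝ}
    (h₁ : IsMarkovKernel E w₁) (h₂ : IsMarkovKernel E w₂)
    (h : Cohomologous E (fun x y => log (w₁ x y)) (fun x y => log (w₂ x y))) : w₁ = w₂ := by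
  obtain ⟨κ, c, hκ⟩ := h
  have hrel : ∀ x y, w₁ x y * exp (κ x) = exp c * (w₂ x y * exp (κ y)) := by
    intro x y
    by_cases hxy : (x, y) ∈ E
    · have hexp := congrArg exp (hκ x y hxy)
      rw [exp_sub, exp_log ((h₁.2.2 x y).2 hxy), exp_log ((h₂.2.2 x y).2 hxy), exp_add,
        exp_sub, div_eq_iff ((h₂.2.2 x y).2 hxy).ne'] at hexp
      rw [hexp]
      field_simp
    · rw [h₁.eq_zero_of_notMem hxy, h₂.eq_zero_of_notMem hxy]
      ring
  have heig : ∀ x, ∑ y, w₂ x y * exp (κ y) = exp (-c) * exp (κ x) := fun x => by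
    rw [exp_neg, eq_inv_mul_iff_mul_eq₀ (exp_pos c).ne', mul_sum, ← h₁.sum_mul_const x (exp (κ x))]
    exact sum_congr rfl fun y _ => (hrel x y).symm
  funext x y
  have : Nonempty X := ⟨x⟩
  have hc : exp (-c) = 1 := h₂.eigenvalue_eq_one_of_pos (fun _ => exp_pos _) heig
  have hκxy : exp (κ x) = exp (κ y) :=
    h₂.eq_of_harmonic hconn (fun x => by rw [heig, hc, one_mul]) x y
  have hc' : exp c = 1 := by rw [exp_neg, inv_eq_one] at hc; exact hc
  have hxy := hrel x y
  rw [hκxy, hc', one_mul] at hxy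
  exact mul_right_cancel₀ (exp_pos _).ne' hxy

end IsMarkovKernel

theorem Delta_surjective_and_fibers_general
    {X : Type*} [Fintype X]
    (E : Finset (X × X)) (hconn : StronglyConnected E)
    (Δ : (X → X → ℝ) → (X → X → ℝ))
    (hΔ : ∀ f : X → X → ℝ, IsMarkovKernel E (Δ f) ∧
      ∃ (Z : ℝ) (γ : X → ℝ), 0 < Z ∧ (∀ x, 0 < γ x) ∧
        ∀ x y, (x, y) ∈ E →
          Δ f x y = (1 / Z) * (γ y / γ x) * Real.exp (f x y)) :
    (∀ w : X → X → ℝ, IsMarkovKernel E w → ∃ f, Δ f = w) ∧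
    (∀ f₁ f₂ : X → X → ℝ, Δ f₁ = Δ f₂ ↔
      ∃ (κ : X → ℝ) (c : ℝ), ∀ x y, (x, y) ∈ E →
        f₁ x y - f₂ x y = κ y - κ x + c) := by
  have hlog : ∀ f, Cohomologous E (fun x y => log (Δ f x y)) f := fun f => by
    obtain ⟨-, Z, γ, hZ, hγ, h⟩ := hΔ f
    exact cohomologous_log_of_eq_gibbs hZ hγ h
  refine ⟨fun w hw => ?_, fun f₁ f₂ => ⟨fun h => ?_, fun h => ?_⟩⟩
  · exact ⟨_, (hΔ _).1.eq_of_cohomologous_log hconn hw (hlog fun x y => log (w x y))⟩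
  · have h₁ := hlog f₁
    rw [h] at h₁
    exact h₁.symm.trans (hlog f₂)
  · exact (hΔ f₁).1.eq_of_cohomologous_log hconn (hΔ f₂).1
      ((hlog f₁).trans (Cohomologous.trans h (hlog f₂).symm))

/-- Let `Δ` send each `f : X × X → ℝ` to the unique
`w ∈ W(X,E)` with `w(y|x) = (1/Z)(γ(y)/γ(x)) exp(f(x,y))` on `E` for some `Z > 0`
and positive `γ`.  Then (i) `Δ` is surjective onto `W(X,E)`, and (ii)
`Δ(f₁) = Δ(f₂)` iff `f₁ − f₂` is, on `E`, of the form `κ(y) − κ(x) + c`. -/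
theorem Delta_surjective_and_fibers
    {X : Type*} [Fintype X] [DecidableEq X] (hX : 2 ≤ Fintype.card X)
    (E : Finset (X × X)) (hconn : StronglyConnected E)
    (Δ : (X → X → ℝ) → (X → X → ℝ))
    (hΔ : ∀ f : X → X → ℝ, IsMarkovKernel E (Δ f) ∧
      ∃ (Z : ℝ) (γ : X → ℝ), 0 < Z ∧ (∀ x, 0 < γ x) ∧
        ∀ x y, (x, y) ∈ E →
          Δ f x y = (1 / Z) * (γ y / γ x) * Real.exp (f x y)) :
    (∀ w : X → X → ℝ, IsMarkovKernel E w → ∃ f, Δ f = w) ∧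
    (∀ f₁ f₂ : X → X → ℝ, Δ f₁ = Δ f₂ ↔
      ∃ (κ : X → ℝ) (c : ℝ), ∀ x y, (x, y) ∈ E →
        f₁ x y - f₂ x y = κ y - κ x + c) :=
  Delta_surjective_and_fibers_general E hconn Δ hΔ
end

section
/- A subset M ⊆ W(X,E) is an exponential family (of some dimension d ≥ 0) if and only if there exist a function f_0 : X × X → ℝ and a linear subspace L of the space of real functions on X × X such that M = { w ∈ W(X,E) : there exist g ∈ L, κ : X → ℝ, and c ∈ ℝ with log w(y|x) = f_0(x,y) + g(x,y) + κ(y) − κ(x) + c for all (x,y) ∈ E }. -/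
open scoped BigOperators

/-- `M ⊆ W(X,E)` is a `d`-dimensional exponential family of Markov kernels:
there exist `C, F₁, …, F_d : X × X → ℝ`, `K : ℝ^d × X → ℝ` and `ψ : ℝ^d → ℝ`
such that, with `w_θ` defined by
`log w_θ(y|x) = C(x,y) + Σᵢ θⁱ Fᵢ(x,y) + K_θ(y) − K_θ(x) − ψ(θ)` on `E`
and `w_θ(y|x) = 0` off `E`, each `w_θ` lies in `W(X,E)` and `M = {w_θ : θ ∈ ℝ^d}`. -/
def IsExpFamily {X : Type*} [Fintype X] (E : Finset (X × X)) (d : ℕ)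
    (M : Set (X → X → ℝ)) : Prop :=
  ∃ (C : X → X → ℝ) (F : Fin d → X → X → ℝ) (K : (Fin d → ℝ) → X → ℝ)
    (ψ : (Fin d → ℝ) → ℝ) (w : (Fin d → ℝ) → X → X → ℝ),
    (∀ θ x y, (x, y) ∈ E →
      Real.log (w θ x y) = C x y + ∑ i, θ i * F i x y + K θ y - K θ x - ψ θ) ∧
    (∀ θ x y, (x, y) ∉ E → w θ x y = 0) ∧
    (∀ θ, IsMarkovKernel E (w θ)) ∧
    M = Set.range w

/-!
A kernel in `W(X,E)` is determined by the class of its logarithm on `E` modulo gauge terms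
`κ(y) - κ(x) + c`, and every function on `E` is, modulo such terms, the logarithm of a kernel.
Uniqueness: if the logarithms of `w, w'` differ by a gauge term, then `h = exp(κ' - κ)` satisfies
`w h = b⁻¹ h`, and the maximum principle on the strongly connected graph forces `h` to be
constant and `b = 1`. Existence: a positive Perron eigenvector `A v = r v` of the irreducible
matrix `A = 1_E · exp f` yields the kernel `A(x,y) v(y) / (r v(x))`, whose logarithm is `f` modulo
a gauge term. Hence an exponential family with data `C, F` is exactly the set of kernels whose
logarithm is `C + g` modulo gauge with `g ∈ span F`, and every subspace `L` is such a span.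
-/

open Finset Matrix

def LogEqUpToGauge {X : Type*} (E : Finset (X × X)) (w f : X → X → ℝ) : Prop :=
  ∃ (κ : X → ℝ) (c : ℝ), ∀ x y, (x, y) ∈ E → Real.log (w x y) = f x y + κ y - κ x + c

namespace StronglyConnected

variable {X : Type*} {E : Finset (X × X)}

theorem exists_mem (hE : StronglyConnected E) (x : X) : ∃ y, (x, y) ∈ E := by
  obtain ⟨y, hxy, -⟩ := Relation.TransGen.head'_iff.1 (hE x x)
  exact ⟨y, hxy⟩

theorem isIrreducible (hE : StronglyConnected E) {A : Matrix X X ℝ} (hA : ∀ x y, 0 ≤ A x y)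
    (hpos : ∀ x y, (x, y) ∈ E → 0 < A x y) : A.IsIrreducible := by
  let := A.toQuiver
  refine ⟨hA, fun x y => ?_⟩
  induction hE x y with
  | single hxy => exact ⟨Quiver.Path.nil.cons ⟨hpos _ _ hxy⟩, by simp⟩
  | tail _ hyz ih =>
    obtain ⟨p, -⟩ := ih
    exact ⟨p.cons ⟨hpos _ _ hyz⟩, by simp⟩

end StronglyConnected

namespace Matrix

variable {n : Type*} [Fintype n]

theorem mulVec_pos_of_pos {P : Matrix n n ℝ} (hP : ∀ i j, 0 < P i j) {u : n → ℝ} (hu : 0 ≤ u)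
    (hu0 : u ≠ 0) (i : n) : 0 < (P *ᵥ u) i := by
  obtain ⟨j, hj⟩ := Function.ne_iff.1 hu0
  exact sum_pos' (fun k _ => mul_nonneg (hP i k).le (hu k))
    ⟨j, mem_univ j, mul_pos (hP i j) (lt_of_le_of_ne (hu j) (Ne.symm hj))⟩

theorem exists_pos_eigenvector_of_commute [Nonempty n] {A P : Matrix n n ℝ}
    (hP : ∀ i j, 0 < P i j) (hAP : Commute A P) :
    ∃ v : n → ℝ, (∀ i, 0 < v i) ∧ ∃ r : ℝ, A *ᵥ v = r • v := by
  classical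
  -- Collatz–Wielandt: maximize `min_i (A v)_i / v_i` over the compact set `P(simplex)`. If the
  -- maximizer `v` is not an eigenvector, `P (A v - r v) > 0` shows that `P v` does strictly better.
  have hPS : ∀ u ∈ stdSimplex ℝ n, ∀ i, 0 < (P *ᵥ u) i := fun u hu =>
    mulVec_pos_of_pos hP hu.1 fun h => by simpa [h] using hu.2
  let cw : (n → ℝ) → ℝ := fun v => univ.inf' univ_nonempty fun i => (A *ᵥ v) i / v i
  have hcont : ContinuousOn (fun u => cw (P *ᵥ u)) (stdSimplex ℝ n) :=
    ContinuousOn.finset_inf'_apply _ fun i _ =>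
      ContinuousOn.div (by fun_prop) (by fun_prop) fun u hu => (hPS u hu i).ne'
  obtain ⟨u, huS, hmax⟩ := (isCompact_stdSimplex ℝ n).exists_isMaxOn
    ⟨_, single_mem_stdSimplex ℝ (Classical.arbitrary n)⟩ hcont
  set v := P *ᵥ u
  have hv : ∀ i, 0 < v i := hPS u huS
  refine ⟨v, hv, cw v, ?_⟩
  have hle : cw v • v ≤ A *ᵥ v := fun i =>
    (le_div_iff₀ (hv i)).1 (inf'_le _ (mem_univ i))
  by_contra hne
  have hlt : ∀ i, cw v * (P *ᵥ v) i < (A *ᵥ (P *ᵥ v)) i := fun i => by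
    have := mulVec_pos_of_pos hP (sub_nonneg.2 hle) (sub_ne_zero.2 hne) i
    rwa [mulVec_sub, mulVec_smul, mulVec_mulVec, ← hAP.eq, ← mulVec_mulVec, Pi.sub_apply,
      Pi.smul_apply, sub_pos, smul_eq_mul] at this
  set s := ∑ i, v i
  have hs : 0 < s := sum_pos (fun i _ => hv i) univ_nonempty
  have hvS : s⁻¹ • v ∈ stdSimplex ℝ n :=
    ⟨fun i => smul_nonneg (inv_nonneg.2 hs.le) (hv i).le, by
      simp only [Pi.smul_apply, smul_eq_mul, ← mul_sum, inv_mul_cancel₀ hs.ne', s]⟩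
  have hmax' : cw (P *ᵥ (s⁻¹ • v)) ≤ cw v := hmax hvS
  refine hmax'.not_gt ((lt_inf'_iff _).2 fun i _ => ?_)
  rw [mulVec_smul, mulVec_smul, Pi.smul_apply, Pi.smul_apply, smul_eq_mul, smul_eq_mul,
    mul_div_mul_left _ _ (inv_ne_zero hs.ne')]
  exact (lt_div_iff₀ (mulVec_pos_of_pos hP (fun j => (hv j).le)
    (fun h => (hv i).ne' (congrFun h i)) i)).2 (hlt i)

theorem IsIrreducible.exists_pos_eigenvector [DecidableEq n] [Nonempty n] {A : Matrix n n ℝ}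
    (hA : A.IsIrreducible) : ∃ v : n → ℝ, (∀ i, 0 < v i) ∧ ∃ r : ℝ, A *ᵥ v = r • v := by
  choose k _ hk using (isIrreducible_iff_exists_pow_pos hA.nonneg).1 hA
  set N := univ.sup (fun p : n × n => k p.1 p.2) + 1
  have hkN : ∀ i j, k i j < N := fun i j =>
    Nat.lt_succ_of_le (le_sup (f := fun p : n × n => k p.1 p.2) (mem_univ (i, j)))
  refine exists_pos_eigenvector_of_commute (P := ∑ m ∈ range N, A ^ m) (fun i j => ?_)
    (Commute.sum_right _ _ _ fun m _ => Commute.self_pow A m)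
  rw [sum_apply]
  calc 0 < (A ^ k i j) i j := hk i j
    _ ≤ ∑ m ∈ range N, (A ^ m) i j :=
      single_le_sum (fun m _ => pow_apply_nonneg hA.nonneg m i j) (mem_range.2 (hkN i j))

end Matrix

namespace IsMarkovKernel

variable {X : Type*} [Fintype X] {E : Finset (X × X)} {w w' : X → X → ℝ}

theorem apply_pos (hw : IsMarkovKernel E w) {x y : X} (hxy : (x, y) ∈ E) : 0 < w x y :=
  (hw.2.2 x y).2 hxy

theorem apply_eq_zero (hw : IsMarkovKernel E w) {x y : X} (hxy : (x, y) ∉ E) : w x y = 0 :=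
  le_antisymm (not_lt.1 fun h => hxy ((hw.2.2 x y).1 h)) (hw.1 x y)

/-- Maximum principle. -/
theorem eq_of_forall_le_sum_mul (hE : StronglyConnected E) (hw : IsMarkovKernel E w) {h : X → ℝ}
    (hsub : ∀ x, h x ≤ ∑ y, w x y * h y) (x y : X) : h x = h y := by
  have : Nonempty X := ⟨x⟩
  obtain ⟨m, hm⟩ := Finite.exists_max h
  have hterm : ∀ u z, 0 ≤ w u z * (h m - h z) := fun u z =>
    mul_nonneg (hw.1 u z) (sub_nonneg.2 (hm z))
  have hstep : ∀ u z, h u = h m → (u, z) ∈ E → h z = h m := by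
    intro u z hu huz
    have hsum : ∑ y, w u y * (h m - h y) = 0 := by
      refine le_antisymm ?_ (sum_nonneg fun y _ => hterm u y)
      simp only [mul_sub, sum_sub_distrib, ← sum_mul, hw.2.1 u, one_mul]
      linarith [hsub u]
    have := (sum_eq_zero_iff_of_nonneg fun y _ => hterm u y).1 hsum z (mem_univ z)
    linarith [(mul_eq_zero.1 this).resolve_left (hw.apply_pos huz).ne']
  have hconst : ∀ z, h z = h m := fun z => by
    induction hE m z with
    | single hmz => exact hstep _ _ rfl hmz
    | tail _ hyz ih => exact hstep _ _ ih hyz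
  rw [hconst x, hconst y]

theorem eq_of_forall_sum_mul_eq_mul (hE : StronglyConnected E) (hw : IsMarkovKernel E w) {h : X → ℝ}
    (hpos : ∀ x, 0 < h x) {s : ℝ} (hs : ∀ x, ∑ y, w x y * h y = s * h x) (x y : X) :
    h x = h y := by
  rcases le_total 1 s with h1 | h1
  · exact hw.eq_of_forall_le_sum_mul hE (fun x => by nlinarith [hs x, hpos x]) x y
  · refine neg_inj.1 (hw.eq_of_forall_le_sum_mul hE (h := -h) (fun x => ?_) x y)
    simp only [Pi.neg_apply, mul_neg, sum_neg_distrib, hs]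
    nlinarith [hpos x]

theorem eq_of_logEqUpToGauge (hE : StronglyConnected E) (hw : IsMarkovKernel E w)
    (hw' : IsMarkovKernel E w') {f : X → X → ℝ} (hwf : LogEqUpToGauge E w f)
    (hw'f : LogEqUpToGauge E w' f) : w = w' := by
  obtain ⟨κ, c, hκ⟩ := hwf
  obtain ⟨κ', c', hκ'⟩ := hw'f
  set h : X → ℝ := fun x => Real.exp (κ' x - κ x)
  set b := Real.exp (c' - c)
  have key : ∀ x y, w' x y * h x = b * (w x y * h y) := by
    intro x y
    by_cases hxy : (x, y) ∈ E
    · rw [← Real.exp_log (hw'.apply_pos hxy), ← Real.exp_log (hw.apply_pos hxy), hκ' x y hxy,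
        hκ x y hxy]
      simp only [h, b, ← Real.exp_add]
      congr 1
      ring
    · simp [hw.apply_eq_zero hxy, hw'.apply_eq_zero hxy]
  have hsum : ∀ x, ∑ y, w x y * h y = b⁻¹ * h x := fun x => by
    rw [eq_inv_mul_iff_mul_eq₀ (Real.exp_pos _).ne', mul_sum]
    calc ∑ y, b * (w x y * h y) = ∑ y, w' x y * h x := sum_congr rfl fun y _ => (key x y).symm
      _ = h x := by rw [← sum_mul, hw'.2.1 x, one_mul]
  have hconst : ∀ x y, h x = h y := hw.eq_of_forall_sum_mul_eq_mul hE (fun x => Real.exp_pos _) hsum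
  have hw'b : ∀ x y, w' x y = b * w x y := fun x y =>
    mul_right_cancel₀ (Real.exp_pos (κ' x - κ x)).ne' (by rw [key, hconst y x]; ring)
  funext x y
  have hb : b = 1 := by simpa [hw'b, ← mul_sum, hw.2.1 x] using hw'.2.1 x
  rw [hw'b, hb, one_mul]

end IsMarkovKernel

section

variable {X : Type*} [Fintype X] {E : Finset (X × X)}

theorem isMarkovKernel_of_mulVec_eq_smul {A : Matrix X X ℝ} (hA : ∀ x y, 0 ≤ A x y)
    (hAE : ∀ x y, 0 < A x y ↔ (x, y) ∈ E) {v : X → ℝ} (hv : ∀ x, 0 < v x) {r : ℝ} (hr : 0 < r)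
    (hAv : A *ᵥ v = r • v) : IsMarkovKernel E fun x y => A x y * v y / (r * v x) := by
  refine ⟨fun x y => div_nonneg (mul_nonneg (hA x y) (hv y).le) (mul_pos hr (hv x)).le,
    fun x => ?_, fun x y => ?_⟩
  · rw [← sum_div, div_eq_one_iff_eq (mul_pos hr (hv x)).ne']
    exact congrFun hAv x
  · rw [div_pos_iff_of_pos_right (mul_pos hr (hv x)), mul_pos_iff_of_pos_right (hv y), hAE]

theorem exists_isMarkovKernel_logEqUpToGauge (hE : StronglyConnected E) (f : X → X → ℝ) :
    ∃ w, IsMarkovKernel E w ∧ LogEqUpToGauge E w f := by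
  classical
  cases isEmpty_or_nonempty X
  · exact ⟨0, ⟨isEmptyElim, isEmptyElim, isEmptyElim⟩, 0, 0, isEmptyElim⟩
  set A : Matrix X X ℝ := of fun x y => if (x, y) ∈ E then Real.exp (f x y) else 0
  have hA : ∀ x y, 0 ≤ A x y := fun x y => by
    simp only [A, of_apply]; split_ifs <;> positivity
  have hAE : ∀ x y, 0 < A x y ↔ (x, y) ∈ E := fun x y => by
    simp only [A, of_apply]; split_ifs with h <;> simp [h, Real.exp_pos]
  obtain ⟨v, hv, r, hAv⟩ :=
    (hE.isIrreducible hA fun x y => (hAE x y).2).exists_pos_eigenvector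
  have hr : 0 < r := by
    obtain ⟨x⟩ := ‹Nonempty X›
    obtain ⟨y, hxy⟩ := hE.exists_mem x
    have hAvx : 0 < (A *ᵥ v) x := sum_pos' (fun y _ => mul_nonneg (hA x y) (hv y).le)
      ⟨y, mem_univ y, mul_pos ((hAE x y).2 hxy) (hv y)⟩
    rw [hAv, Pi.smul_apply, smul_eq_mul] at hAvx
    exact pos_of_mul_pos_left hAvx (hv x).le
  refine ⟨_, isMarkovKernel_of_mulVec_eq_smul hA hAE hv hr hAv,
    fun x => Real.log (v x), -Real.log r, fun x y hxy => ?_⟩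
  simp only [A, of_apply, if_pos hxy]
  rw [Real.log_div (mul_pos (Real.exp_pos _) (hv y)).ne' (mul_pos hr (hv x)).ne',
    Real.log_mul (Real.exp_pos _).ne' (hv y).ne', Real.log_mul hr.ne' (hv x).ne', Real.log_exp]
  ring

theorem range_eq_setOf_logEqUpToGauge (hE : StronglyConnected E) {d : ℕ} {C : X → X → ℝ}
    {F : Fin d → X → X → ℝ} {K : (Fin d → ℝ) → X → ℝ} {ψ : (Fin d → ℝ) → ℝ}
    {w : (Fin d → ℝ) → X → X → ℝ}
    (hlog : ∀ θ x y, (x, y) ∈ E →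
      Real.log (w θ x y) = C x y + ∑ i, θ i * F i x y + K θ y - K θ x - ψ θ)
    (hw : ∀ θ, IsMarkovKernel E (w θ)) :
    Set.range w = {w' | IsMarkovKernel E w' ∧
      ∃ g ∈ Submodule.span ℝ (Set.range F), LogEqUpToGauge E w' (C + g)} := by
  have hgauge : ∀ θ, LogEqUpToGauge E (w θ) (C + ∑ i, θ i • F i) := fun θ =>
    ⟨K θ, -ψ θ, fun x y hxy => by
      simp only [hlog θ x y hxy, Pi.add_apply, Finset.sum_apply, Pi.smul_apply, smul_eq_mul]
      ring⟩
  ext w'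
  constructor
  · rintro ⟨θ, rfl⟩
    exact ⟨hw θ, _, (Submodule.mem_span_range_iff_exists_fun ℝ).2 ⟨θ, rfl⟩, hgauge θ⟩
  · rintro ⟨hw', g, hg, hw'g⟩
    obtain ⟨θ, rfl⟩ := (Submodule.mem_span_range_iff_exists_fun ℝ).1 hg
    exact ⟨θ, (hw θ).eq_of_logEqUpToGauge hE hw' (hgauge θ) hw'g⟩

end

theorem expFamily_iff_affine_subspace_general
    {X : Type*} [Fintype X] (E : Finset (X × X)) (hconn : StronglyConnected E)
    (M : Set (X → X → ℝ)) :
    (∃ d : ℕ, IsExpFamily E d M) ↔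
      ∃ (f₀ : X → X → ℝ) (L : Submodule ℝ (X → X → ℝ)),
        M = {w : X → X → ℝ | IsMarkovKernel E w ∧
          ∃ g ∈ L, ∃ (κ : X → ℝ) (c : ℝ), ∀ x y, (x, y) ∈ E →
            Real.log (w x y) = f₀ x y + g x y + κ y - κ x + c} := by
  constructor
  · rintro ⟨d, C, F, K, ψ, w, hlog, -, hw, rfl⟩
    exact ⟨C, _, range_eq_setOf_logEqUpToGauge hconn hlog hw⟩
  · rintro ⟨f₀, L, rfl⟩
    obtain ⟨d, F, hF⟩ := Submodule.fg_iff_exists_fin_generating_family.1 (IsNoetherian.noetherian L)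
    choose w hw hgauge using fun θ : Fin d → ℝ =>
      exists_isMarkovKernel_logEqUpToGauge hconn (f₀ + ∑ i, θ i • F i)
    choose K c hK using hgauge
    have hlog : ∀ θ x y, (x, y) ∈ E →
        Real.log (w θ x y) = f₀ x y + ∑ i, θ i * F i x y + K θ y - K θ x - -c θ := by
      intro θ x y hxy
      simp only [hK θ x y hxy, Pi.add_apply, Finset.sum_apply, Pi.smul_apply, smul_eq_mul]
      ring
    refine ⟨d, f₀, F, K, fun θ => -c θ, w, hlog, fun θ x y => (hw θ).apply_eq_zero, hw, ?_⟩
    rw [range_eq_setOf_logEqUpToGauge hconn hlog hw, hF]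
    rfl

/-- Theorem 2. A subset `M ⊆ W(X,E)` is an exponential family
(of some dimension `d`) iff there exist a function `f₀ : X × X → ℝ` and a linear
subspace `L` of the space of real functions on `X × X` such that `M` consists of
exactly those kernels `w ∈ W(X,E)` whose logarithm is, on `E`, of the form
`f₀(x,y) + g(x,y) + κ(y) − κ(x) + c` with `g ∈ L`, `κ : X → ℝ`, `c ∈ ℝ`. -/
theorem expFamily_iff_affine_subspace
    {X : Type*} [Fintype X] [DecidableEq X] (hX : 2 ≤ Fintype.card X)
    (E : Finset (X × X)) (hconn : StronglyConnected E)
    (M : Set (X → X → ℝ)) :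
    (∃ d : ℕ, IsExpFamily E d M) ↔
      ∃ (f₀ : X → X → ℝ) (L : Submodule ℝ (X → X → ℝ)),
        M = {w : X → X → ℝ | IsMarkovKernel E w ∧
          ∃ g ∈ L, ∃ (κ : X → ℝ) (c : ℝ), ∀ x y, (x, y) ∈ E →
            Real.log (w x y) = f₀ x y + g x y + κ y - κ x + c} :=
  expFamily_iff_affine_subspace_general E hconn M
end

section
/- Let {w_θ : θ ∈ ℝ^d} ⊆ W(X,E) be an exponential family given by C, F_1, …, F_d, K, ψ. For w ∈ W(X,E) set p_w^(2)(x,y) = p_w(x) w(y|x) and define the divergence D(w | w') = Σ_{(x,y)∈E} p_w^(2)(x,y) log( w(y|x)/w'(y|x) ), and for θ ∈ ℝ^d set η_i(θ) = Σ_{(x,y)∈E} p_{w_θ}^(2)(x,y) F_i(x,y). Then for all θ_1, θ_2, θ_3 ∈ ℝ^d: D(w_{θ_1} | w_{θ_2}) + D(w_{θ_2} | w_{θ_3}) − D(w_{θ_1} | w_{θ_3}) = Σ_{i=1}^d (η_i(θ_1) − η_i(θ_2)) (θ_3^i − θ_2^i). -/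
open scoped BigOperators

/-- `p` is the (positive) stationary distribution of the Markov kernel `w`. -/
def IsStationaryDistKernel {X : Type*} [Fintype X] (w : X → X → ℝ) (p : X → ℝ) : Prop :=
  (∀ x, 0 < p x) ∧ (∑ x, p x = 1) ∧ (∀ y, ∑ x, p x * w x y = p y)

/-!
Expanding `log (w_a / w_b)` with the exponential-family formula, the divergence
`D(w_a | w_b)` is the mean, under the stationary edge measure `p_a(x) w_a(y|x)`, of
`Σᵢ (aⁱ - bⁱ) Fᵢ(x,y) + g(y) - g(x) + ψ(b) - ψ(a)` with `g = K_a - K_b`. The edge measure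
has total mass one, and stationarity makes the mean of every coboundary `g(y) - g(x)`
vanish, so `D(w_a | w_b) = Σᵢ (aⁱ - bⁱ) ηᵢ(a) + ψ(b) - ψ(a)`. In the alternating sum of three
such divergences the `ψ` terms cancel and what remains is the claimed bilinear expression.
-/

open Finset

section StationaryEdgeMeasure

variable {X : Type*} [Fintype X] {E : Finset (X × X)} {w : X → X → ℝ} {p : X → ℝ}

theorem IsMarkovKernel.eq_zero_of_notMem_s16 (hw : IsMarkovKernel E w) {x y : X}
    (hxy : (x, y) ∉ E) : w x y = 0 :=
  le_antisymm (not_lt.mp fun h => hxy ((hw.2.2 x y).mp h)) (hw.1 x y)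

theorem IsMarkovKernel.sum_edges_eq_sum_sum (hw : IsMarkovKernel E w) (g : X × X → ℝ) :
    ∑ e ∈ E, p e.1 * w e.1 e.2 * g e = ∑ x, ∑ y, p x * w x y * g (x, y) := by
  rw [← Fintype.sum_prod_type' (fun x y => p x * w x y * g (x, y))]
  refine sum_subset (subset_univ E) fun e _ he => ?_
  rw [hw.eq_zero_of_notMem_s16 he, mul_zero, zero_mul]

theorem IsMarkovKernel.sum_edges_eq_one (hw : IsMarkovKernel E w)
    (hp : IsStationaryDistKernel w p) : ∑ e ∈ E, p e.1 * w e.1 e.2 = 1 := by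
  have h := hw.sum_edges_eq_sum_sum (p := p) fun _ => 1
  simp only [mul_one] at h
  rw [h, ← hp.2.1]
  exact sum_congr rfl fun x _ => by rw [← mul_sum, hw.2.1 x, mul_one]

theorem IsMarkovKernel.sum_edges_mul_sub_eq_zero (hw : IsMarkovKernel E w)
    (hp : IsStationaryDistKernel w p) (g : X → ℝ) :
    ∑ e ∈ E, p e.1 * w e.1 e.2 * (g e.2 - g e.1) = 0 := by
  have h_in : ∑ x, ∑ y, p x * w x y * g y = ∑ y, p y * g y := by
    rw [sum_comm]
    refine sum_congr rfl fun y _ => ?_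
    rw [← sum_mul, hp.2.2 y]
  have h_out : ∑ x, ∑ y, p x * w x y * g x = ∑ x, p x * g x :=
    sum_congr rfl fun x _ => by
      rw [← sum_mul, ← mul_sum, hw.2.1 x, mul_one]
  rw [hw.sum_edges_eq_sum_sum fun e => g e.2 - g e.1]
  simp only [mul_sub, sum_sub_distrib, h_in, h_out, sub_self]

end StationaryEdgeMeasure

theorem divergence_eq_of_expFamily {X : Type*} [Fintype X] {d : ℕ} {E : Finset (X × X)}
    {C : X → X → ℝ} {F : Fin d → X → X → ℝ} {K : (Fin d → ℝ) → X → ℝ}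
    {ψ : (Fin d → ℝ) → ℝ} {w : (Fin d → ℝ) → X → X → ℝ}
    (hlog : ∀ θ x y, (x, y) ∈ E →
      Real.log (w θ x y) = C x y + ∑ i, θ i * F i x y + K θ y - K θ x - ψ θ)
    (hker : ∀ θ, IsMarkovKernel E (w θ)) {p : X → ℝ} (a b : Fin d → ℝ)
    (hp : IsStationaryDistKernel (w a) p) :
    ∑ e ∈ E, p e.1 * w a e.1 e.2 * Real.log (w a e.1 e.2 / w b e.1 e.2)
      = ∑ i, (∑ e ∈ E, p e.1 * w a e.1 e.2 * F i e.1 e.2) * (a i - b i) + (ψ b - ψ a) := by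
  set g : X → ℝ := fun x => K a x - K b x
  have h_log : ∀ e ∈ E, Real.log (w a e.1 e.2 / w b e.1 e.2)
      = ∑ i, F i e.1 e.2 * (a i - b i) + (g e.2 - g e.1) + (ψ b - ψ a) := by
    intro e he
    rw [Real.log_div ((hker a).2.2 _ _ |>.mpr he).ne' ((hker b).2.2 _ _ |>.mpr he).ne',
      hlog a _ _ he, hlog b _ _ he]
    simp only [g, mul_comm (F _ _ _), sub_mul, sum_sub_distrib]
    ring
  rw [sum_congr rfl fun e he => by rw [h_log e he]]
  simp only [mul_add, sum_add_distrib, mul_sum, ← mul_assoc]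
  rw [sum_comm, ← sum_mul, (hker a).sum_edges_eq_one hp, one_mul,
    (hker a).sum_edges_mul_sub_eq_zero hp, add_zero]
  simp only [sum_mul]

theorem divergence_triangle_relation_general
    {X : Type*} [Fintype X] {d : ℕ}
    (E : Finset (X × X))
    (C : X → X → ℝ) (F : Fin d → X → X → ℝ) (K : (Fin d → ℝ) → X → ℝ)
    (ψ : (Fin d → ℝ) → ℝ) (w : (Fin d → ℝ) → X → X → ℝ)
    (hlog : ∀ θ x y, (x, y) ∈ E →
      Real.log (w θ x y) = C x y + ∑ i, θ i * F i x y + K θ y - K θ x - ψ θ)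
    (hker : ∀ θ, IsMarkovKernel E (w θ))
    (p : (Fin d → ℝ) → X → ℝ) (hp : ∀ θ, IsStationaryDistKernel (w θ) (p θ))
    (θ₁ θ₂ θ₃ : Fin d → ℝ) :
    (∑ e ∈ E, p θ₁ e.1 * w θ₁ e.1 e.2 * Real.log (w θ₁ e.1 e.2 / w θ₂ e.1 e.2))
      + (∑ e ∈ E, p θ₂ e.1 * w θ₂ e.1 e.2 * Real.log (w θ₂ e.1 e.2 / w θ₃ e.1 e.2))
      - (∑ e ∈ E, p θ₁ e.1 * w θ₁ e.1 e.2 * Real.log (w θ₁ e.1 e.2 / w θ₃ e.1 e.2))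
    = ∑ i, ((∑ e ∈ E, p θ₁ e.1 * w θ₁ e.1 e.2 * F i e.1 e.2)
            - (∑ e ∈ E, p θ₂ e.1 * w θ₂ e.1 e.2 * F i e.1 e.2)) * (θ₃ i - θ₂ i) := by
  rw [divergence_eq_of_expFamily hlog hker θ₁ θ₂ (hp θ₁),
    divergence_eq_of_expFamily hlog hker θ₂ θ₃ (hp θ₂),
    divergence_eq_of_expFamily hlog hker θ₁ θ₃ (hp θ₁)]
  simp only [sub_mul, mul_sub, sum_sub_distrib]
  ring

/-- generalized Pythagorean-type relation. For an exponential
family `{w_θ} ⊆ W(X,E)` with stationary distributions `p_θ`, divergence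
`D(w|w') = Σ_{(x,y)∈E} p_w(x) w(y|x) log(w(y|x)/w'(y|x))` and expectation
parameters `η_i(θ) = Σ_{(x,y)∈E} p_θ(x) w_θ(y|x) F_i(x,y)`, one has
`D(w_{θ₁}|w_{θ₂}) + D(w_{θ₂}|w_{θ₃}) − D(w_{θ₁}|w_{θ₃})
  = Σ_i (η_i(θ₁) − η_i(θ₂)) (θ₃ⁱ − θ₂ⁱ)`. -/
theorem divergence_triangle_relation
    {X : Type*} [Fintype X] [DecidableEq X] {d : ℕ}
    (hX : 2 ≤ Fintype.card X)
    (E : Finset (X × X)) (hconn : StronglyConnected E)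
    (C : X → X → ℝ) (F : Fin d → X → X → ℝ) (K : (Fin d → ℝ) → X → ℝ)
    (ψ : (Fin d → ℝ) → ℝ) (w : (Fin d → ℝ) → X → X → ℝ)
    (hlog : ∀ θ x y, (x, y) ∈ E →
      Real.log (w θ x y) = C x y + ∑ i, θ i * F i x y + K θ y - K θ x - ψ θ)
    (hzero : ∀ θ x y, (x, y) ∉ E → w θ x y = 0)
    (hker : ∀ θ, IsMarkovKernel E (w θ))
    (p : (Fin d → ℝ) → X → ℝ) (hp : ∀ θ, IsStationaryDistKernel (w θ) (p θ))
    (θ₁ θ₂ θ₃ : Fin d → ℝ) :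
    (∑ e ∈ E, p θ₁ e.1 * w θ₁ e.1 e.2 * Real.log (w θ₁ e.1 e.2 / w θ₂ e.1 e.2))
      + (∑ e ∈ E, p θ₂ e.1 * w θ₂ e.1 e.2 * Real.log (w θ₂ e.1 e.2 / w θ₃ e.1 e.2))
      - (∑ e ∈ E, p θ₁ e.1 * w θ₁ e.1 e.2 * Real.log (w θ₁ e.1 e.2 / w θ₃ e.1 e.2))
    = ∑ i, ((∑ e ∈ E, p θ₁ e.1 * w θ₁ e.1 e.2 * F i e.1 e.2)
            - (∑ e ∈ E, p θ₂ e.1 * w θ₂ e.1 e.2 * F i e.1 e.2)) * (θ₃ i - θ₂ i) :=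
  divergence_triangle_relation_general E C F K ψ w hlog hker p hp θ₁ θ₂ θ₃
end
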